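/- arXiv:math/0509349 — 2 statements merged into one kernel-verified Lean document; each statement's English description precedes it below -/
import Mathlib

section
/- Let Γ be a pre-automatic structure over a finite alphabet A with an interpretation σ : A⁺ → S. For nonempty words u, v ∈ A⁺, the elements σ(u) and σ(v) are right translationally equivalent in S if and only if L_u = L_v. In particular, whether two words represent right translationally equivalent elements is independent of the choice of interpretation: if τ : A⁺ → T is another interpretation of Γ, then σ(u), σ(v) are right translationally equivalent in S if and only if τ(u), τ(v) are right translationally equivalent in T. -/
universe u v

/-- A pre-automatic structure over an alphabet `A`: a language `L` of nonempty words
(elements of the free semigroup `A⁺`), a relation `L₌ ⊆ L × L`, and for each letter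
`a ∈ A` a relation `Lₐ ⊆ L × L`. -/
structure PreAutomaticStructure (A : Type u) where
  L : Set (FreeSemigroup A)
  Leq : Set (FreeSemigroup A × FreeSemigroup A)
  Lletter : A → Set (FreeSemigroup A × FreeSemigroup A)
  Leq_sub : Leq ⊆ L ×ˢ L
  Lletter_sub : ∀ a, Lletter a ⊆ L ×ˢ L

/-- An interpretation of a pre-automatic structure with respect to a semigroup `S`:
a semigroup homomorphism `σ : A⁺ → S` such that (i) `σ(L) = S`, (ii) `L₌` captures
equality of representatives, (iii) `Lₐ` captures right multiplication by `a`. -/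
structure IsInterpretation {A : Type u} {S : Type v} [Semigroup S]
    (Γ : PreAutomaticStructure A) (σ : FreeSemigroup A →ₙ* S) : Prop where
  surj : ⇑σ '' Γ.L = Set.univ
  eq_iff : ∀ u ∈ Γ.L, ∀ v ∈ Γ.L, ((u, v) ∈ Γ.Leq ↔ σ u = σ v)
  step_iff : ∀ (a : A), ∀ u ∈ Γ.L, ∀ v ∈ Γ.L,
    ((u, v) ∈ Γ.Lletter a ↔ σ (u * FreeSemigroup.of a) = σ v)

/-- `σ` is consistent with the assignment of generators `ι : A → L`. -/
def ConsistentWith {A : Type u} {S : Type v} [Semigroup S] (Γ : PreAutomaticStructure A)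
    (σ : FreeSemigroup A →ₙ* S) (ι : A → FreeSemigroup A) : Prop :=
  (∀ a, ι a ∈ Γ.L) ∧ ∀ a, σ (ι a) = σ (FreeSemigroup.of a)

/-- `ι : A → L` is an assignment of generators: some interpretation is consistent with it. -/
def IsAssignment {A : Type u} (Γ : PreAutomaticStructure A)
    (ι : A → FreeSemigroup A) : Prop :=
  ∃ (T : Type v) (inst : Semigroup T)
    (τ : @MulHom (FreeSemigroup A) T _ inst.toMul),
    @IsInterpretation A T inst Γ τ ∧ @ConsistentWith A T inst Γ τ ι

/-- Composition of relations: `(u, v) ∈ R ∘ R'` iff `∃ x, (u, x) ∈ R ∧ (x, v) ∈ R'`. -/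
def relComp {W : Type*} (R R' : Set (W × W)) : Set (W × W) :=
  {p | ∃ x, (p.1, x) ∈ R ∧ (x, p.2) ∈ R'}

/-- The inverse of a relation. -/
def relInv {W : Type*} (R : Set (W × W)) : Set (W × W) := {p | (p.2, p.1) ∈ R}

/-- `L_w` for a word `w` given as a list of letters: `L_ε = L₌` and
`L_{a₁⋯aₙ} = L_{a₁} ∘ ⋯ ∘ L_{aₙ}`. -/
def PreAutomaticStructure.LwordList {A : Type u} (Γ : PreAutomaticStructure A) :
    List A → Set (FreeSemigroup A × FreeSemigroup A)
  | [] => Γ.Leq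
  | [a] => Γ.Lletter a
  | a :: b :: rest => relComp (Γ.Lletter a) (Γ.LwordList (b :: rest))

/-- `L_w` for a nonempty word `w ∈ A⁺`. -/
def PreAutomaticStructure.Lword {A : Type u} (Γ : PreAutomaticStructure A)
    (w : FreeSemigroup A) : Set (FreeSemigroup A × FreeSemigroup A) :=
  Γ.LwordList (w.head :: w.tail)

/-- Two elements of a semigroup are right translationally equivalent if they act
identically by right translation. -/
def RTEquiv {S : Type v} [Semigroup S] (s t : S) : Prop := ∀ x : S, x * s = x * t

/-! Surjectivity of `σ` on `L` and faithfulness of `L₌`, `Lₐ` give, by induction on `w`,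
`(x, y) ∈ L_w ↔ x, y ∈ L ∧ σ(x) σ(w) = σ(y)`: `L_w` is the graph of right multiplication by
`σ(w)`, read on representatives in `L`. Two right translations of `S` agree iff their graphs
do, and `L_w` does not mention `σ`. -/

namespace IsInterpretation

variable {A : Type u} {S : Type v} [Semigroup S] {Γ : PreAutomaticStructure A}
  {σ : FreeSemigroup A →ₙ* S}

theorem exists_mem_L_map_eq (hσ : IsInterpretation Γ σ) (s : S) : ∃ z ∈ Γ.L, σ z = s :=
  (hσ.surj.symm ▸ Set.mem_univ s : s ∈ σ '' Γ.L)

theorem mem_Lletter_iff (hσ : IsInterpretation Γ σ) (a : A) (x y : FreeSemigroup A) :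
    (x, y) ∈ Γ.Lletter a ↔ x ∈ Γ.L ∧ y ∈ Γ.L ∧ σ (x * FreeSemigroup.of a) = σ y := by
  constructor
  · intro h
    obtain ⟨hx, hy⟩ := Γ.Lletter_sub a h
    exact ⟨hx, hy, (hσ.step_iff a x hx y hy).1 h⟩
  · rintro ⟨hx, hy, h⟩
    exact (hσ.step_iff a x hx y hy).2 h

theorem mem_LwordList_cons_iff (hσ : IsInterpretation Γ σ) (a : A) (l : List A)
    (x y : FreeSemigroup A) :
    (x, y) ∈ Γ.LwordList (a :: l) ↔ x ∈ Γ.L ∧ y ∈ Γ.L ∧ σ (x * ⟨a, l⟩) = σ y := by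
  induction l generalizing a x with
  | nil => exact hσ.mem_Lletter_iff a x y
  | cons b r ih =>
    have hsplit : σ (x * ⟨a, b :: r⟩) = σ (x * FreeSemigroup.of a) * σ ⟨b, r⟩ := by
      rw [← map_mul, mul_assoc]
      rfl
    simp only [PreAutomaticStructure.LwordList, relComp, Set.mem_ofPred_eq,
      hσ.mem_Lletter_iff, ih, hsplit]
    constructor
    · rintro ⟨z, ⟨hx, -, hxz⟩, -, hy, hzy⟩
      exact ⟨hx, hy, by rw [hxz, ← map_mul, hzy]⟩
    · rintro ⟨hx, hy, hxy⟩
      obtain ⟨z, hz, hzx⟩ := hσ.exists_mem_L_map_eq (σ (x * FreeSemigroup.of a))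
      exact ⟨z, ⟨hx, hz, hzx.symm⟩, hz, hy, by rw [map_mul, hzx, hxy]⟩

theorem mem_Lword_iff (hσ : IsInterpretation Γ σ) (w x y : FreeSemigroup A) :
    (x, y) ∈ Γ.Lword w ↔ x ∈ Γ.L ∧ y ∈ Γ.L ∧ σ (x * w) = σ y :=
  hσ.mem_LwordList_cons_iff w.head w.tail x y

theorem rtEquiv_iff_Lword_eq (hσ : IsInterpretation Γ σ) (u v : FreeSemigroup A) :
    RTEquiv (σ u) (σ v) ↔ Γ.Lword u = Γ.Lword v := by
  constructor
  · intro h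
    ext ⟨x, y⟩
    simp only [hσ.mem_Lword_iff, map_mul, h (σ x)]
  · intro h s
    obtain ⟨x, hx, rfl⟩ := hσ.exists_mem_L_map_eq s
    obtain ⟨y, hy, hxy⟩ := hσ.exists_mem_L_map_eq (σ (x * u))
    have hu : (x, y) ∈ Γ.Lword u := (hσ.mem_Lword_iff u x y).2 ⟨hx, hy, hxy.symm⟩
    obtain ⟨-, -, hv⟩ := (hσ.mem_Lword_iff v x y).1 (h ▸ hu)
    rw [← map_mul, ← map_mul, ← hxy, hv]

end IsInterpretation

theorem stmt_4_general {A : Type*} {S T : Type*} [Semigroup S] [Semigroup T]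
    (Γ : PreAutomaticStructure A)
    (σ : FreeSemigroup A →ₙ* S) (hσ : IsInterpretation Γ σ)
    (τ : FreeSemigroup A →ₙ* T) (hτ : IsInterpretation Γ τ)
    (u v : FreeSemigroup A) :
    (RTEquiv (σ u) (σ v) ↔ Γ.Lword u = Γ.Lword v) ∧
    (RTEquiv (σ u) (σ v) ↔ RTEquiv (τ u) (τ v)) :=
  ⟨hσ.rtEquiv_iff_Lword_eq u v,
    (hσ.rtEquiv_iff_Lword_eq u v).trans (hτ.rtEquiv_iff_Lword_eq u v).symm⟩

/-- `σ(u)` and `σ(v)` are right translationally equivalent iff `L_u = L_v`; in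
particular right translational equivalence of the represented elements is independent
of the choice of interpretation. -/
theorem stmt_4 {A : Type*} [Finite A] {S T : Type*} [Semigroup S] [Semigroup T]
    (Γ : PreAutomaticStructure A)
    (σ : FreeSemigroup A →ₙ* S) (hσ : IsInterpretation Γ σ)
    (τ : FreeSemigroup A →ₙ* T) (hτ : IsInterpretation Γ τ)
    (u v : FreeSemigroup A) :
    (RTEquiv (σ u) (σ v) ↔ Γ.Lword u = Γ.Lword v) ∧
    (RTEquiv (σ u) (σ v) ↔ RTEquiv (τ u) (τ v)) :=
  stmt_4_general Γ σ hσ τ hτ u v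
end

section
/- Let Γ be a pre-automatic structure over a finite alphabet A that is an automatic cross-section, with interpretation σ : A⁺ → S. Then S is right cancellative if and only if for every a ∈ A, the relation L_a ∘ L_a⁻¹ equals the diagonal relation { (u, u) : u ∈ L } on L. -/
universe u v

/-! In a semigroup generated by the images of the letters, right cancellativity only has to be
checked against generators, since products of right-regular elements are right-regular. For a
letter `a`, a pair `(u, v)` lies in `L_a ∘ L_a⁻¹` exactly when `σ u · σ a = σ v · σ a` (the
common successor exists because `σ(L) = S`), and on a cross-section `σ u = σ v` means `u = v`;
so `L_a ∘ L_a⁻¹` is the diagonal exactly when `σ a` is right-regular. -/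

theorem FreeSemigroup.isRightRegular_map {A : Type*} {S : Type*} [Semigroup S]
    (σ : FreeSemigroup A →ₙ* S) (h : ∀ a, IsRightRegular (σ (FreeSemigroup.of a)))
    (w : FreeSemigroup A) : IsRightRegular (σ w) := by
  induction w using FreeSemigroup.recOnMul with
  | ih1 a => exact h a
  | ih2 p q hp hq => simpa only [map_mul] using hp.mul hq

theorem FreeSemigroup.forall_isRightRegular_iff_of_surjective {A : Type*} {S : Type*}
    [Semigroup S] {σ : FreeSemigroup A →ₙ* S} (hσ : Function.Surjective σ) :
    (∀ s : S, IsRightRegular s) ↔ ∀ a, IsRightRegular (σ (FreeSemigroup.of a)) := by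
  refine ⟨fun h a => h _, fun h s => ?_⟩
  obtain ⟨w, rfl⟩ := hσ s
  exact isRightRegular_map σ h w

namespace IsInterpretation

variable {A : Type*} {S : Type*} [Semigroup S] {Γ : PreAutomaticStructure A}
  {σ : FreeSemigroup A →ₙ* S}

theorem exists_mem_L (hσ : IsInterpretation Γ σ) (s : S) : ∃ u ∈ Γ.L, σ u = s :=
  (Set.mem_image σ Γ.L s).1 (hσ.surj ▸ Set.mem_univ s)

theorem mem_relComp_relInv_Lletter_iff (hσ : IsInterpretation Γ σ) (a : A)
    (u v : FreeSemigroup A) :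
    (u, v) ∈ relComp (Γ.Lletter a) (relInv (Γ.Lletter a)) ↔
      u ∈ Γ.L ∧ v ∈ Γ.L ∧ σ u * σ (FreeSemigroup.of a) = σ v * σ (FreeSemigroup.of a) := by
  simp only [← map_mul]
  constructor
  · rintro ⟨x, hux, hvx⟩
    obtain ⟨hu, hx⟩ := Γ.Lletter_sub a hux
    have hv := (Γ.Lletter_sub a hvx).1
    exact ⟨hu, hv, ((hσ.step_iff a u hu x hx).1 hux).trans ((hσ.step_iff a v hv x hx).1 hvx).symm⟩
  · rintro ⟨hu, hv, huv⟩
    obtain ⟨x, hx, hσx⟩ := hσ.exists_mem_L (σ (u * FreeSemigroup.of a))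
    exact ⟨x, (hσ.step_iff a u hu x hx).2 hσx.symm,
      (hσ.step_iff a v hv x hx).2 (huv.symm.trans hσx.symm)⟩

theorem relComp_relInv_Lletter_eq_diagonal_iff (hσ : IsInterpretation Γ σ)
    (hinj : Set.InjOn σ Γ.L) (a : A) :
    relComp (Γ.Lletter a) (relInv (Γ.Lletter a)) =
        {p : FreeSemigroup A × FreeSemigroup A | p.1 ∈ Γ.L ∧ p.2 = p.1} ↔
      IsRightRegular (σ (FreeSemigroup.of a)) := by
  constructor
  · intro hdiag x y hxy
    obtain ⟨u, hu, rfl⟩ := hσ.exists_mem_L x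
    obtain ⟨v, hv, rfl⟩ := hσ.exists_mem_L y
    have hmem := (hσ.mem_relComp_relInv_Lletter_iff a u v).2 ⟨hu, hv, hxy⟩
    rw [hdiag] at hmem
    exact congrArg σ hmem.2.symm
  · intro hreg
    ext ⟨u, v⟩
    rw [hσ.mem_relComp_relInv_Lletter_iff]
    constructor
    · rintro ⟨hu, hv, huv⟩
      exact ⟨hu, hinj hv hu (hreg huv).symm⟩
    · rintro ⟨hu, rfl : v = u⟩
      exact ⟨hu, hu, rfl⟩

end IsInterpretation

theorem stmt_8_general {A : Type*} {S : Type*} [Semigroup S]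
    (Γ : PreAutomaticStructure A) (σ : FreeSemigroup A →ₙ* S)
    (hσ : IsInterpretation Γ σ) (hcs : Set.BijOn (⇑σ) Γ.L Set.univ) :
    (∀ x y s : S, x * s = y * s → x = y) ↔
      ∀ a : A, relComp (Γ.Lletter a) (relInv (Γ.Lletter a)) =
        {p : FreeSemigroup A × FreeSemigroup A | p.1 ∈ Γ.L ∧ p.2 = p.1} := by
  have hsurj : Function.Surjective σ := fun s => (hσ.exists_mem_L s).imp fun _ => And.right
  calc (∀ x y s : S, x * s = y * s → x = y) ↔ ∀ s : S, IsRightRegular s :=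
        ⟨fun h s x y => h x y s, fun h x y s => @h s x y⟩
    _ ↔ ∀ a, IsRightRegular (σ (FreeSemigroup.of a)) :=
        FreeSemigroup.forall_isRightRegular_iff_of_surjective hsurj
    _ ↔ _ := forall_congr' fun a =>
        (hσ.relComp_relInv_Lletter_eq_diagonal_iff hcs.injOn a).symm

/-- For an automatic cross-section: the semigroup is right cancellative iff for every
generator `a`, `L_a ∘ L_a⁻¹` is the diagonal relation on `L`. -/
theorem stmt_8 {A : Type*} [Finite A] {S : Type*} [Semigroup S]
    (Γ : PreAutomaticStructure A) (σ : FreeSemigroup A →ₙ* S)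
    (hσ : IsInterpretation Γ σ) (hcs : Set.BijOn (⇑σ) Γ.L Set.univ) :
    (∀ x y s : S, x * s = y * s → x = y) ↔
      ∀ a : A, relComp (Γ.Lletter a) (relInv (Γ.Lletter a)) =
        {p : FreeSemigroup A × FreeSemigroup A | p.1 ∈ Γ.L ∧ p.2 = p.1} :=
  stmt_8_general Γ σ hσ hcs
end
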